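/- Let (v_n)_{n≥0} satisfy 1 = v_0 ≤ v_1 ≤ v_2 ≤ ⋯ and, with the convention v_{-1} = 0, the condition v_{n-2} v_{2p-1} + v_{2p-3} v_{n-2p} = v_n v_{2p-3} + v_{2p-1} v_{n-2p} for all n ≥ 2 and p ≥ 1 with 2p ≤ n. Define weights w_1 = 1 and w_n = v_{n-1}(v_n − v_{n-2})/v_1 for n ≥ 2. Then the nested-sum coefficients built from these weights satisfy, for all n ≥ 1 and 1 ≤ m with 2m ≤ n: α_{2m-1,n-1} = (w_1 w_3 ⋯ w_{2m-1}) · (v_{n-1})! / ((v_{2m-1})! (v_{n-2m-1})!), where (v_k)! = v_0 v_1 ⋯ v_k and (v_{-1})! = (v_0)! = 1. -/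

import Mathlib

open Finset

/-- The nested-sum coefficients: `alphaC w m N` is `α_{2m-1, N}`, i.e.
`α_{2m-1,n-1} = ∑_{k₁=2m-1}^{n-1} w_{k₁} ∑_{k₂=2m-3}^{k₁-2} w_{k₂} ⋯ ∑_{k_m=1}^{k_{m-1}-2} w_{k_m}`
with `α_{-1,N} = 1` and empty sums equal to `0`. -/
noncomputable def alphaC (w : ℕ → ℝ) : ℕ → ℕ → ℝ
  | 0, _ => 1
  | m + 1, N => ∑ k ∈ Finset.Icc (2 * m + 1) N, w k * alphaC w m (k - 2)

/-- Extension of a sequence `v : ℕ → ℝ` to integer indices by `0`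
(the convention `v_{-1} = 0`). -/
noncomputable def vext (v : ℕ → ℝ) : ℤ → ℝ := fun n => if 0 ≤ n then v n.toNat else 0

/-!
Write `[a, b] = vBinom v a b = (v_{a+b-1})! / ((v_{a-1})! (v_{b-1})!)` and induct on `m`.
By the induction hypothesis `α_{2m+1,n-1} = w_1 w_3 ⋯ w_{2m-1} ∑_{j ≤ n-2m-2} w_{2m+1+j} [2m, j]`,
and the compatibility condition at `p = m + 1` is exactly what turns each summand with `j ≥ 1`
into `w_{2m+1} ([2m+2, j] - [2m+2, j-1])`, so the sum telescopes to `w_{2m+1} [2m+2, n-2m-2]`.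
-/

noncomputable def vBinom (v : ℕ → ℝ) (a b : ℕ) : ℝ :=
  (∏ i ∈ range (a + b), v i) / ((∏ i ∈ range a, v i) * ∏ i ∈ range b, v i)

section vBinom

variable {v w : ℕ → ℝ}

lemma prod_range_ne_zero (hv : ∀ n, v n ≠ 0) (n : ℕ) : ∏ i ∈ range n, v i ≠ 0 :=
  prod_ne_zero_iff.2 fun i _ => hv i

lemma vBinom_zero_left (hv : ∀ n, v n ≠ 0) (b : ℕ) : vBinom v 0 b = 1 := by
  simp [vBinom, prod_range_ne_zero hv]

lemma vBinom_zero_right (hv : ∀ n, v n ≠ 0) (a : ℕ) : vBinom v a 0 = 1 := by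
  simp [vBinom, prod_range_ne_zero hv]

lemma weight_mul_vBinom_eq (hv : ∀ n, v n ≠ 0) {a d : ℕ} {c : ℝ}
    (hwa : w (a + 1) = v a * c / v 1)
    (hwd : w (a + d + 2) = v (a + d + 1) * (v (a + d + 2) - v (a + d)) / v 1)
    (hc : c * (v (a + d + 2) - v d) = v (a + 1) * (v (a + d + 2) - v (a + d))) :
    w (a + d + 2) * vBinom v a (d + 1) =
      w (a + 1) * (vBinom v (a + 2) (d + 1) - vBinom v (a + 2) d) := by
  have hP := prod_range_ne_zero hv
  simp only [vBinom, show a + (d + 1) = a + d + 1 by ring,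
    show a + 2 + (d + 1) = a + d + 1 + 1 + 1 by ring, show a + 2 + d = a + d + 1 + 1 by ring,
    show a + 2 = a + 1 + 1 by ring, prod_range_succ, hwa, hwd]
  field_simp [hv, hP]
  linear_combination -hc

lemma sum_range_weight_mul_vBinom (hv : ∀ n, v n ≠ 0) (a : ℕ)
    (hstep : ∀ d, w (a + d + 2) * vBinom v a (d + 1) =
      w (a + 1) * (vBinom v (a + 2) (d + 1) - vBinom v (a + 2) d)) (d : ℕ) :
    ∑ j ∈ range (d + 1), w (a + 1 + j) * vBinom v a j = w (a + 1) * vBinom v (a + 2) d := by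
  have hsum : ∑ j ∈ range d, w (a + 1 + (j + 1)) * vBinom v a (j + 1) =
      w (a + 1) * (vBinom v (a + 2) d - 1) := by
    rw [← vBinom_zero_right hv (a + 2), ← sum_range_sub, mul_sum]
    exact sum_congr rfl fun j _ => by rw [← hstep j, show a + 1 + (j + 1) = a + j + 2 by ring]
  rw [sum_range_succ', hsum, vBinom_zero_right hv, add_zero]
  ring

lemma alphaC_eq_mul_vBinom (hv : ∀ n, v n ≠ 0)
    (hstep : ∀ m d, w (2 * m + d + 2) * vBinom v (2 * m) (d + 1) =
      w (2 * m + 1) * (vBinom v (2 * m + 2) (d + 1) - vBinom v (2 * m + 2) d)) (m d : ℕ) :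
    alphaC w m (2 * m + d - 1) = (∏ j ∈ range m, w (2 * j + 1)) * vBinom v (2 * m) d := by
  induction m generalizing d with
  | zero => simp [alphaC, vBinom_zero_left hv]
  | succ m ih =>
    have hinner (j : ℕ) : alphaC w m (2 * m + 1 + j - 2) =
        (∏ j ∈ range m, w (2 * j + 1)) * vBinom v (2 * m) j := by
      rw [← ih j]; congr 1; omega
    rw [show 2 * (m + 1) + d - 1 = 2 * m + 1 + d by omega, alphaC,
      ← Ico_add_one_right_eq_Icc, sum_Ico_eq_sum_range,
      show 2 * m + 1 + d + 1 - (2 * m + 1) = d + 1 by omega]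
    simp only [hinner, mul_left_comm _ (∏ j ∈ range m, w (2 * j + 1)), ← mul_sum]
    rw [sum_range_weight_mul_vBinom hv (2 * m) (hstep m), prod_range_succ, mul_add_one, mul_assoc]

end vBinom

section Compat

variable {v w : ℕ → ℝ}

lemma vext_natCast (v : ℕ → ℝ) (n : ℕ) : vext v n = v n := by
  simp [vext]

lemma weight_odd_eq (hv0 : v 0 = 1) (hv1 : v 1 ≠ 0) (hw1 : w 1 = 1)
    (hwn : ∀ n : ℕ, 2 ≤ n → w n = v (n - 1) * (v n - v (n - 2)) / v 1) (m : ℕ) :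
    w (2 * m + 1) = v (2 * m) * (v (2 * m + 1) - vext v (2 * m - 1)) / v 1 := by
  rcases m with _ | m
  · simp [vext, hw1, hv0, hv1]
  · rw [hwn _ (by omega), show 2 * ((m + 1 : ℕ) : ℤ) - 1 = (2 * m + 1 : ℕ) by omega,
      vext_natCast]
    rfl

lemma sub_mul_sub_eq_of_compat
    (hcompat : ∀ n p : ℤ, 2 ≤ n → 1 ≤ p → 2 * p ≤ n →
      vext v (n - 2) * vext v (2 * p - 1) + vext v (2 * p - 3) * vext v (n - 2 * p) =
        vext v n * vext v (2 * p - 3) + vext v (2 * p - 1) * vext v (n - 2 * p)) (m d : ℕ) :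
    (v (2 * m + 1) - vext v (2 * m - 1)) * (v (2 * m + d + 2) - v d) =
      v (2 * m + 1) * (v (2 * m + d + 2) - v (2 * m + d)) := by
  have h := hcompat (2 * m + d + 2 : ℕ) (m + 1) (by omega) (by omega) (by omega)
  rw [show ((2 * m + d + 2 : ℕ) : ℤ) - 2 = (2 * m + d : ℕ) by omega,
    show 2 * ((m : ℤ) + 1) - 1 = (2 * m + 1 : ℕ) by omega,
    show 2 * ((m : ℤ) + 1) - 3 = 2 * m - 1 by omega,
    show ((2 * m + d + 2 : ℕ) : ℤ) - 2 * ((m : ℤ) + 1) = d by omega] at h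
  simp only [vext_natCast] at h
  linear_combination h

end Compat

theorem stmt_8 (v : ℕ → ℝ) (hv0 : v 0 = 1) (hmono : ∀ n : ℕ, v n ≤ v (n + 1))
    (hcompat : ∀ n p : ℤ, 2 ≤ n → 1 ≤ p → 2 * p ≤ n →
      vext v (n - 2) * vext v (2 * p - 1) + vext v (2 * p - 3) * vext v (n - 2 * p) =
        vext v n * vext v (2 * p - 3) + vext v (2 * p - 1) * vext v (n - 2 * p))
    (w : ℕ → ℝ) (hw1 : w 1 = 1)
    (hwn : ∀ n : ℕ, 2 ≤ n → w n = v (n - 1) * (v n - v (n - 2)) / v 1) :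
    ∀ n : ℕ, 1 ≤ n → ∀ m : ℕ, 1 ≤ m → 2 * m ≤ n →
      alphaC w m (n - 1) =
        (∏ j ∈ Finset.range m, w (2 * j + 1)) *
          (∏ i ∈ Finset.range n, v i) /
          ((∏ i ∈ Finset.range (2 * m), v i) *
            (∏ i ∈ Finset.range (n - 2 * m), v i)) := by
  have hv (n : ℕ) : v n ≠ 0 :=
    (zero_lt_one.trans_le (hv0 ▸ monotone_nat_of_le_succ hmono (Nat.zero_le n))).ne'
  have hstep (m d : ℕ) := weight_mul_vBinom_eq hv (weight_odd_eq hv0 (hv 1) hw1 hwn m)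
    (hwn (2 * m + d + 2) (by omega)) (sub_mul_sub_eq_of_compat hcompat m d)
  intro n _ m _ hmn
  obtain ⟨d, rfl⟩ := Nat.exists_eq_add_of_le hmn
  rw [alphaC_eq_mul_vBinom hv hstep, vBinom, Nat.add_sub_cancel_left, mul_div_assoc]
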